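/- arXiv:2305.01158 — 3 statements merged into one kernel-verified Lean document; each statement's English description precedes it below -/
import Mathlib

section
/- For F ∈ SL(d, ℤ) partially hyperbolic, irreducibility of the characteristic polynomial of F over ℚ implies Katznelson irreducibility of F (with respect to any partially hyperbolic splitting S ⊕ C ⊕ U with C a proper subspace). -/
open Polynomial in
/-- irreducibility of the characteristic polynomial over `ℚ` implies
Katznelson irreducibility for a partially hyperbolic `F ∈ SL(d,ℤ)` (with respect to
any partially hyperbolic splitting `S ⊕ C ⊕ U` with `C` proper). -/
theorem stmt_3 (d : ℕ) (hd : 2 ≤ d) (F : Matrix (Fin d) (Fin d) ℤ) (hdet : F.det = 1)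
    (A : (Fin d → ℝ) →ₗ[ℝ] (Fin d → ℝ))
    (hA : A = ((F.map (Int.cast : ℤ → ℝ)).mulVecLin))
    (S C U : Submodule ℝ (Fin d → ℝ))
    (hcompl : IsCompl C (S ⊔ U)) (hSU : Disjoint S U) (hCproper : C ≠ ⊤)
    (hCinv : ∀ x ∈ C, A x ∈ C) (hSUinv : ∀ x ∈ S ⊔ U, A x ∈ S ⊔ U)
    -- disjoint spectra of `F|_C` and `F|_{S⊕U}` (partial hyperbolicity)
    (hspec : ∀ z : ℂ, ¬ (((LinearMap.charpoly (A.restrict hCinv)).map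
        (algebraMap ℝ ℂ)).IsRoot z ∧
      ((LinearMap.charpoly (A.restrict hSUinv)).map (algebraMap ℝ ℂ)).IsRoot z))
    -- irreducibility of the characteristic polynomial over `ℚ`
    (hirr : Irreducible (F.charpoly.map (algebraMap ℤ ℚ))) :
    -- Katznelson irreducibility
    ∀ p : Fin d → ℤ, ((fun i => (p i : ℝ)) ∈ C) → p = 0 := by

  intro p hp
  by_contra hp0
  apply hCproper
  -- the rational matrix and its action
  set M : Matrix (Fin d) (Fin d) ℚ := F.map (algebraMap ℤ ℚ) with hM
  set f : Module.End ℚ (Fin d → ℚ) := Matrix.toLinAlgEquiv' M with hf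
  set v : Fin d → ℚ := fun i => (p i : ℚ) with hv
  have hvne : v ≠ 0 := by
    intro h
    apply hp0
    funext i
    have := congrFun h i
    simpa [hv] using this
  -- characteristic polynomial facts
  have hchar : M.charpoly = F.charpoly.map (algebraMap ℤ ℚ) :=
    Matrix.charpoly_map F (algebraMap ℤ ℚ)
  have hirr' : Irreducible M.charpoly := hchar ▸ hirr
  have hdeg : M.charpoly.natDegree = d := by
    rw [Matrix.charpoly_natDegree_eq_dim, Fintype.card_fin]
  -- the annihilator ideal of v
  set I : Ideal (Polynomial ℚ) :=
    { carrier := {q | Polynomial.aeval f q v = 0}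
      add_mem' := fun {a b} ha hb => by
        simp only [Set.mem_setOf_eq, map_add, LinearMap.add_apply] at *
        rw [ha, hb, add_zero]
      zero_mem' := by simp
      smul_mem' := fun c q hq => by
        simp only [Set.mem_setOf_eq, smul_eq_mul, map_mul, Module.End.mul_apply] at *
        rw [hq, map_zero] } with hI
  have hmemI : ∀ q : Polynomial ℚ, q ∈ I ↔ Polynomial.aeval f q v = 0 := fun q => Iff.rfl
  have hCH : M.charpoly ∈ I := by
    rw [hmemI, hf, Polynomial.aeval_algHom_apply (Matrix.toLinAlgEquiv' (R := ℚ)) M,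
      Matrix.aeval_self_charpoly]
    simp
  -- any nonzero element of I has degree ≥ d
  have hdvd : ∀ q ∈ I, q ≠ 0 → d ≤ q.natDegree := by
    intro q hq hq0
    have hgen : ∀ x : Polynomial ℚ, x ∈ I ↔ Submodule.IsPrincipal.generator I ∣ x :=
      fun x => Submodule.IsPrincipal.mem_iff_generator_dvd I
    obtain ⟨b, hb⟩ := (hgen _).mp hCH
    rcases hirr'.isUnit_or_isUnit hb with hg | hbu
    · -- generator is a unit: then v = 0, contradiction
      exfalso
      have : I = ⊤ := Ideal.eq_top_of_isUnit_mem I (Submodule.IsPrincipal.generator_mem I) hg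
      have h1 : (1 : Polynomial ℚ) ∈ I := this ▸ Submodule.mem_top
      rw [hmemI] at h1
      simp at h1
      exact hvne h1
    · -- generator is associated to charpoly
      have hassoc : Associated (Submodule.IsPrincipal.generator I) M.charpoly := by
        obtain ⟨u, hu⟩ := hbu
        exact ⟨u, by rw [hb, ← hu]⟩
      have hdq : M.charpoly ∣ q := hassoc.symm.dvd.trans ((hgen _).mp hq)
      calc d = M.charpoly.natDegree := hdeg.symm
        _ ≤ q.natDegree := natDegree_le_of_dvd hdq hq0
  -- linear independence of v, f v, ..., f^(d-1) v
  have hli : LinearIndependent ℚ (fun i : Fin d => (f ^ (i : ℕ)) v) := by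
    rw [Fintype.linearIndependent_iff]
    intro c hc i
    set q : Polynomial ℚ := ∑ i : Fin d, Polynomial.monomial (i : ℕ) (c i) with hqdef
    have haq : Polynomial.aeval f q v = ∑ i : Fin d, c i • (f ^ (i : ℕ)) v := by
      rw [hqdef, map_sum, LinearMap.sum_apply]
      congr 1
      funext j
      rw [Polynomial.aeval_monomial]
      simp [Algebra.smul_def]
    have hqI : q ∈ I := by rw [hmemI, haq, hc]
    have hq0 : q = 0 := by
      by_contra h0
      have hge := hdvd q hqI h0
      have hlt : q.natDegree < d := by
        refine lt_of_le_of_lt (Polynomial.natDegree_sum_le _ _) ?_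
        rw [Finset.fold_max_lt]
        refine ⟨by omega, fun j _ => ?_⟩
        exact lt_of_le_of_lt (Polynomial.natDegree_monomial_le (c j)) j.isLt
      omega
    have := congrArg (fun r => Polynomial.coeff r (i : ℕ)) hq0
    simp only [hqdef, Polynomial.finset_sum_coeff, Polynomial.coeff_monomial,
      Polynomial.coeff_zero] at this
    simp only [Fin.val_eq_val, Finset.sum_ite_eq', Finset.mem_univ, if_true] at this
    exact this
  -- the orbit of v spans ℚ^d
  have hspan : Submodule.span ℚ (Set.range fun i : Fin d => (f ^ (i : ℕ)) v) = ⊤ := by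
    apply Submodule.eq_top_of_finrank_eq
    rw [finrank_span_eq_card hli, Fintype.card_fin, Module.finrank_fin_fun]
  -- the cast map to ℝ
  set j : (Fin d → ℚ) →ₗ[ℚ] (Fin d → ℝ) :=
    { toFun := fun w i => (w i : ℝ)
      map_add' := fun a b => by funext i; push_cast; simp
      map_smul' := fun c w => by
        funext i
        simp [Rat.smul_def] } with hj
  have hjapp : ∀ (w : Fin d → ℚ) (i : Fin d), j w i = (w i : ℝ) := fun w i => rfl
  -- j intertwines f and A
  have hjf : ∀ w : Fin d → ℚ, j (f w) = A (j w) := by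
    intro w
    funext i
    rw [hjapp, hA]
    simp only [hf, Matrix.toLinAlgEquiv'_apply, Matrix.mulVecLin_apply, Matrix.mulVec,
      dotProduct, hM, Matrix.map_apply]
    push_cast
    rfl
  -- orbit lands in C
  have hmemC : ∀ n : ℕ, j ((f ^ n) v) ∈ C := by
    intro n
    induction n with
    | zero =>
      simp only [pow_zero, Module.End.one_apply]
      have : j v = fun i => (p i : ℝ) := by
        funext i
        rw [hjapp]
        push_cast [hv]
        rfl
      rw [this]; exact hp
    | succ n ih =>
      rw [pow_succ', Module.End.mul_apply, hjf]
      exact hCinv _ ih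
  -- hence every rational vector lands in C
  have hall : ∀ w : Fin d → ℚ, j w ∈ C := by
    intro w
    have hle : Submodule.span ℚ (Set.range fun i : Fin d => (f ^ (i : ℕ)) v) ≤
        Submodule.comap j (C.restrictScalars ℚ) := by
      rw [Submodule.span_le]
      rintro _ ⟨i, rfl⟩
      exact hmemC _
    rw [hspan] at hle
    exact hle Submodule.mem_top
  -- the standard basis vectors are rational, so C = ⊤
  rw [eq_top_iff, ← (Pi.basisFun ℝ (Fin d)).span_eq, Submodule.span_le]
  rintro _ ⟨i, rfl⟩
  have : (Pi.basisFun ℝ (Fin d)) i = j (Pi.single i 1) := by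
    funext k
    rw [hjapp, Pi.basisFun_apply]
    by_cases h : k = i
    · subst h; simp
    · simp [Pi.single_apply, Ne.symm h]
  rw [this]
  exact hall _
end

section
/- A monic polynomial with rational coefficients all of whose complex roots have modulus exactly 1 has only roots of unity as roots (Kronecker's theorem for rational polynomials, via clearing denominators). -/
/-!
Clearing denominators: a root of `η` is a root of the monic integer polynomial `g`, hence an
algebraic integer. Its conjugates are roots of its minimal polynomial over `ℚ`, which divides `η`,
so they all have modulus `1`, and Kronecker's theorem in the number field `ℚ(z)` applies.
-/

open Polynomial

theorem isIntegral_of_aeval_eq_zero_of_dvd_map {R K A : Type*} [CommRing R] [CommRing K]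
    [CommRing A] [Algebra R K] [Algebra K A] [Algebra R A] [IsScalarTower R K A]
    {p : K[X]} {g : R[X]} (hg : g.Monic) (hdvd : p ∣ g.map (algebraMap R K)) {z : A}
    (hz : aeval z p = 0) : IsIntegral R z :=
  ⟨g, hg, by
    rw [← aeval_def, ← aeval_map_algebraMap K]
    exact aeval_eq_zero_of_dvd_aeval_eq_zero hdvd hz⟩

theorem IsIntegral.isOfFinOrder_of_norm_eq_one_of_aeval_minpoly {z : ℂ} (hz : IsIntegral ℤ z)
    (hconj : ∀ w : ℂ, aeval w (minpoly ℚ z) = 0 → ‖w‖ = 1) : IsOfFinOrder z := by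
  let K := IntermediateField.adjoin ℚ {z}
  have : FiniteDimensional ℚ K := IntermediateField.adjoin.finiteDimensional hz.tower_top
  have : NumberField K := ⟨⟩
  let x : K := IntermediateField.AdjoinSimple.gen ℚ z
  have hxz : algebraMap K ℂ x = z := rfl
  have hx : IsIntegral ℤ x :=
    (isIntegral_algebraMap_iff (algebraMap K ℂ).injective).mp (hxz ▸ hz)
  have hnorm : ∀ φ : K →+* ℂ, ‖φ x‖ = 1 := by
    intro φ
    have hφ : φ x ∈ (minpoly ℚ x).rootSet ℂ :=
      NumberField.Embeddings.range_eval_eq_rootSet_minpoly K ℂ x ▸ ⟨φ, rfl⟩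
    rw [mem_rootSet, ← minpoly.algebraMap_eq (algebraMap K ℂ).injective, hxz] at hφ
    exact hconj _ hφ.2
  obtain ⟨n, hn, hxn⟩ := NumberField.Embeddings.pow_eq_one_of_norm_eq_one K ℂ hx hnorm
  exact isOfFinOrder_iff_pow_eq_one.mpr ⟨n, hn, by rw [← hxz, ← map_pow, hxn, map_one]⟩

theorem stmt_4_general (η : Polynomial ℚ)
    (g : Polynomial ℤ) (hg : g.Monic) (hdvd : η ∣ g.map (algebraMap ℤ ℚ))
    (hmod : ∀ z : ℂ, ((η.map (algebraMap ℚ ℂ)).IsRoot z) → ‖z‖ = 1) :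
    ∀ z : ℂ, ((η.map (algebraMap ℚ ℂ)).IsRoot z) → ∃ n : ℕ, 0 < n ∧ z ^ n = 1 := by
  have isRoot_iff (w : ℂ) : (η.map (algebraMap ℚ ℂ)).IsRoot w ↔ aeval w η = 0 := by
    rw [IsRoot, eval_map, aeval_def]
  intro z hz
  rw [isRoot_iff] at hz
  have hint : IsIntegral ℤ z := isIntegral_of_aeval_eq_zero_of_dvd_map hg hdvd hz
  have hconj (w : ℂ) (hw : aeval w (minpoly ℚ z) = 0) : ‖w‖ = 1 :=
    hmod w <| (isRoot_iff w).mpr <| aeval_eq_zero_of_dvd_aeval_eq_zero (minpoly.dvd ℚ z hz) hw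
  exact isOfFinOrder_iff_pow_eq_one.mp (hint.isOfFinOrder_of_norm_eq_one_of_aeval_minpoly hconj)

/-- Kronecker's theorem for rational polynomials: a monic rational
polynomial dividing a monic integer polynomial, all of whose complex roots have
modulus exactly `1`, has only roots of unity as roots. -/
theorem stmt_4 (η : Polynomial ℚ) (hmonic : η.Monic)
    (g : Polynomial ℤ) (hg : g.Monic) (hdvd : η ∣ g.map (algebraMap ℤ ℚ))
    (hmod : ∀ z : ℂ, ((η.map (algebraMap ℚ ℂ)).IsRoot z) → ‖z‖ = 1) :
    ∀ z : ℂ, ((η.map (algebraMap ℚ ℂ)).IsRoot z) → ∃ n : ℕ, 0 < n ∧ z ^ n = 1 :=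
  stmt_4_general η g hg hdvd hmod
end

section
/- If F ∈ SL(d, ℤ) is not Katznelson irreducible (for a partially hyperbolic splitting S ⊕ C ⊕ U), then there exists a continuous function φ : 𝕋^d → ℝ with trivial periodic cycle functionals along stable/unstable cycles of F which is not cohomologous to a constant, i.e., there is no continuous u with φ = u∘F − u + const. Equivalently: solvability of the cohomological equation for all φ with trivial periodic cycle functionals implies Katznelson irreducibility. -/
/-!
An integer vector `p ∈ C` yields a nonzero integer covector `q` vanishing on `S ⊔ U`. Indeed, let
`f ∈ ℤ[X]` be an annihilating polynomial of `p` of least degree. The Krylov vectors `Fⁱ p`,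
`i < deg f`, stay linearly independent over `ℝ`, so `f` divides the characteristic polynomial of
`F` on `C`; hence `f` is coprime to the one on `S ⊔ U`, i.e. `f(F)` is invertible there. Any
integer `q` in the left kernel of the singular matrix `f(F)` therefore vanishes on `S ⊔ U`.

Then `φ x = ‖∑ qᵢ xᵢ‖` is invariant under translation along `S ⊔ U`, a property preserved by `F`
and `F⁻¹`, so every holonomy vanishes. On the other hand `φ` vanishes at the fixed point `0` and
is positive at a torsion point, which is periodic. Were `φ = u ∘ F - u + K`, Birkhoff sums along an
`m`-periodic orbit would equal `m K`; the fixed point gives `K = 0`, contradicting positivity on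
the other orbit.
-/

/-- Stable holonomy functional `Hol_x^y φ = Σ_{n≥0} (φ(fⁿx) − φ(fⁿy))`
(junk value if the series does not converge). -/
noncomputable def holS {X : Type*} (T : X → X) (φ : X → ℝ) (x y : X) : ℝ :=
  ∑' n : ℕ, (φ (T^[n] x) - φ (T^[n] y))

/-- Unstable holonomy functional `Hol_x^y φ = −Σ_{n≥1} (φ(f⁻ⁿx) − φ(f⁻ⁿy))`. -/
noncomputable def holU {X : Type*} (Tinv : X → X) (φ : X → ℝ) (x y : X) : ℝ :=
  -∑' n : ℕ, (φ (Tinv^[n + 1] x) - φ (Tinv^[n + 1] y))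

/-- `φ` has trivial periodic cycle functionals: around every closed cycle whose
legs are stable (`sRel`) or unstable (`uRel`) segments, the sum of the
corresponding holonomy functionals vanishes. -/
def TrivialPCF {X : Type*} (T Tinv : X → X) (sRel uRel : X → X → Prop)
    (φ : X → ℝ) : Prop :=
  ∀ (k : ℕ) (γ : Fin (k + 1) → X) (s : Fin k → Bool),
    γ 0 = γ (Fin.last k) →
    (∀ j : Fin k, if s j then sRel (γ j.castSucc) (γ j.succ)
      else uRel (γ j.castSucc) (γ j.succ)) →
    (∑ j : Fin k, if s j then holS T φ (γ j.castSucc) (γ j.succ)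
      else holU Tinv φ (γ j.castSucc) (γ j.succ)) = 0

open Polynomial Matrix Function Set

namespace Matrix

section Krylov

variable {R : Type*} [CommRing R] {n : Type*} [Fintype n]

theorem map_mulVec_algebraMap_comp {L : Type*} [CommRing L] [Algebra R L] (N : Matrix n n R)
    (w : n → R) : N.map (algebraMap R L) *ᵥ (algebraMap R L ∘ w) = algebraMap R L ∘ (N *ᵥ w) :=
  funext fun i => (RingHom.map_mulVec _ N w i).symm

variable [DecidableEq n]

theorem aeval_map_algebraMap_eq {L : Type*} [CommRing L] [Algebra R L] (M : Matrix n n R)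
    (f : R[X]) : aeval (M.map (algebraMap R L)) f = (aeval M f).map (algebraMap R L) :=
  aeval_algHom_apply (Algebra.ofId R L).mapMatrix M f

theorem aeval_map_algebraMap_mulVec {L : Type*} [CommRing L] [Algebra R L] (M : Matrix n n R)
    (f : R[X]) (w : n → R) : aeval (M.map (algebraMap R L)) f *ᵥ (algebraMap R L ∘ w) =
      algebraMap R L ∘ (aeval M f *ᵥ w) := by
  rw [aeval_map_algebraMap_eq, map_mulVec_algebraMap_comp]

theorem aeval_mulVec_eq_sum (M : Matrix n n R) (v : n → R) {f : R[X]} {k : ℕ}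
    (hf : f.degree < k) : aeval M f *ᵥ v = ∑ i : Fin k, f.coeff i • (M ^ (i : ℕ)) *ᵥ v := by
  rcases eq_or_ne f 0 with rfl | hf0
  · simp
  rw [aeval_eq_sum_range' ((natDegree_lt_iff_degree_lt hf0).mpr hf), sum_mulVec,
    ← Fin.sum_univ_eq_sum_range (fun i => (f.coeff i • M ^ i) *ᵥ v)]
  simp only [smul_mulVec]

theorem linearIndependent_krylov_iff (M : Matrix n n R) (v : n → R) (k : ℕ) :
    LinearIndependent R (fun i : Fin k => (M ^ (i : ℕ)) *ᵥ v) ↔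
      ∀ f : R[X], f.degree < k → aeval M f *ᵥ v = 0 → f = 0 := by
  rw [Fintype.linearIndependent_iff]
  constructor
  · intro h f hf hfv
    rw [aeval_mulVec_eq_sum M v hf] at hfv
    ext j
    rcases lt_or_ge j k with hj | hj
    · exact h (fun i => f.coeff i) hfv ⟨j, hj⟩
    · exact coeff_eq_zero_of_degree_lt (hf.trans_le (by exact_mod_cast hj))
  · intro h c hc i
    set f : degreeLT R k := (degreeLT.basis R k).equivFun.symm c
    have hcoeff : ∀ i : Fin k, (f : R[X]).coeff i = c i := fun i => by
      rw [← degreeLT.basis_repr, ← Module.Basis.equivFun_apply, LinearEquiv.apply_symm_apply]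
    have hf := mem_degreeLT.mp f.2
    have hf0 := h f hf (by simpa only [aeval_mulVec_eq_sum M v hf, hcoeff] using hc)
    rw [← hcoeff, hf0, coeff_zero]

theorem exists_annihilator_linearIndependent_krylov [Nontrivial R] (M : Matrix n n R)
    (v : n → R) : ∃ f : R[X], f ≠ 0 ∧ aeval M f *ᵥ v = 0 ∧
      LinearIndependent R (fun i : Fin f.natDegree => (M ^ (i : ℕ)) *ᵥ v) := by
  classical
  have hex : ∃ k, ∃ f : R[X], f ≠ 0 ∧ aeval M f *ᵥ v = 0 ∧ f.natDegree = k :=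
    ⟨_, M.charpoly, M.charpoly_monic.ne_zero, by simp [aeval_self_charpoly], rfl⟩
  obtain ⟨f, hf0, hfv, hdeg⟩ := Nat.find_spec hex
  refine ⟨f, hf0, hfv, (linearIndependent_krylov_iff M v _).mpr fun g hg hgv => ?_⟩
  by_contra hg0
  exact Nat.find_min hex (hdeg ▸ (natDegree_lt_iff_degree_lt hg0).mpr hg) ⟨g, hg0, hgv, rfl⟩

theorem map_dvd_of_aeval_mulVec_eq_zero {L : Type*} [Field L] [Algebra R L] [FaithfulSMul R L]
    {M : Matrix n n R} {v : n → R} {f : R[X]} (hf0 : f ≠ 0) (hfv : aeval M f *ᵥ v = 0)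
    (hind : LinearIndependent R (fun i : Fin f.natDegree => (M ^ (i : ℕ)) *ᵥ v))
    {g : L[X]} (hgv : aeval (M.map (algebraMap R L)) g *ᵥ (algebraMap R L ∘ v) = 0) :
    f.map (algebraMap R L) ∣ g := by
  have hinj := FaithfulSMul.algebraMap_injective R L
  have hindL : LinearIndependent L (fun i : Fin f.natDegree =>
      (M.map (algebraMap R L) ^ (i : ℕ)) *ᵥ (algebraMap R L ∘ v)) := by
    simpa only [← Matrix.map_pow, map_mulVec_algebraMap_comp]
      using linearIndependent_algebraMap_comp_iff.mpr hind
  set fL := f.map (algebraMap R L)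
  have hfL0 : fL ≠ 0 := (Polynomial.map_ne_zero_iff hinj).mpr hf0
  have hfLv : aeval (M.map (algebraMap R L)) fL *ᵥ (algebraMap R L ∘ v) = 0 := by
    rw [aeval_map_algebraMap, aeval_map_algebraMap_mulVec, hfv]
    exact funext fun _ => map_zero _
  have hr : g % fL = 0 := by
    refine (linearIndependent_krylov_iff _ _ _).mp hindL _ ?_ ?_
    · rw [← natDegree_map_eq_of_injective hinj, ← degree_eq_natDegree hfL0]
      exact degree_mod_lt g hfL0
    · rw [EuclideanDomain.mod_eq_sub_mul_div, mul_comm, map_sub, map_mul, sub_mulVec,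
        ← mulVec_mulVec, hfLv, mulVec_zero, hgv, sub_zero]
  exact EuclideanDomain.mod_eq_zero.mp hr

end Krylov

theorem aeval_mulVecLin_apply {K n : Type*} [CommRing K] [Fintype n] [DecidableEq n]
    (M : Matrix n n K) (f : K[X]) (v : n → K) : aeval M.mulVecLin f v = aeval M f *ᵥ v :=
  LinearMap.congr_fun (aeval_algHom_apply (toLinAlgEquiv' (R := K) (n := n)).toAlgHom M f) v

end Matrix

theorem LinearMap.aeval_restrict_apply {R M : Type*} [CommRing R] [AddCommGroup M] [Module R M]
    (A : Module.End R M) {W : Submodule R M} (hW : ∀ x ∈ W, A x ∈ W) (f : R[X]) (x : W) :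
    (aeval (A.restrict hW) f x : M) = aeval A f x := by
  induction f using Polynomial.induction_on' with
  | add f g hf hg => simp [hf, hg]
  | monomial k a =>
    simp only [aeval_monomial, Module.End.mul_apply, Module.algebraMap_end_apply,
      SetLike.val_smul]
    rw [Module.End.pow_restrict]
    rfl

section InvariantSubspace

variable {K V : Type*} [Field K] [AddCommGroup V] [Module K V]

theorem LinearMap.aeval_charpoly_restrict_apply [FiniteDimensional K V] (A : Module.End K V)
    {W : Submodule K V} (hW : ∀ x ∈ W, A x ∈ W) {x : V} (hx : x ∈ W) :
    aeval A (A.restrict hW).charpoly x = 0 := by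
  rw [← A.aeval_restrict_apply hW _ ⟨x, hx⟩, LinearMap.aeval_self_charpoly]
  rfl

theorem LinearMap.apply_mem_of_comp_eq_id [FiniteDimensional K V] {A B : V →ₗ[K] V}
    (hBA : B ∘ₗ A = LinearMap.id) {W : Submodule K V} (hW : ∀ x ∈ W, A x ∈ W) {x : V}
    (hx : x ∈ W) : B x ∈ W := by
  have hinj : Injective (A.restrict hW) := fun y z hyz => Subtype.ext <| by
    simpa [← LinearMap.comp_apply, hBA] using congrArg (fun w : W => B w) hyz
  obtain ⟨w, hw⟩ := LinearMap.injective_iff_surjective.mp hinj ⟨x, hx⟩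
  have hAw : A w = x := congrArg Subtype.val hw
  rw [← hAw, ← LinearMap.comp_apply, hBA, LinearMap.id_apply]
  exact w.2

end InvariantSubspace

theorem Polynomial.isCoprime_of_forall_not_isRoot_map {k K : Type*} [Field k] [Field K]
    [IsAlgClosed K] [Algebra k K] {p q : k[X]}
    (h : ∀ z : K, ¬ ((p.map (algebraMap k K)).IsRoot z ∧ (q.map (algebraMap k K)).IsRoot z)) :
    IsCoprime p q :=
  (isCoprime_iff_aeval_ne_zero_of_isAlgClosed k K p q).mpr fun z => by
    simpa only [not_and_or, IsRoot.def, eval_map_algebraMap] using h z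

theorem exists_int_orthogonal_of_int_mem {n : Type*} [Fintype n] [DecidableEq n]
    (F : Matrix n n ℤ) {C W : Submodule ℝ (n → ℝ)}
    (hC : ∀ x ∈ C, (F.map (Int.cast : ℤ → ℝ)).mulVecLin x ∈ C)
    (hW : ∀ x ∈ W, (F.map (Int.cast : ℤ → ℝ)).mulVecLin x ∈ W)
    (hcop : IsCoprime ((F.map (Int.cast : ℤ → ℝ)).mulVecLin.restrict hC).charpoly
      ((F.map (Int.cast : ℤ → ℝ)).mulVecLin.restrict hW).charpoly)
    {p : n → ℤ} (hp : p ≠ 0) (hpC : (fun i => (p i : ℝ)) ∈ C) :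
    ∃ q : n → ℤ, q ≠ 0 ∧ ∀ v ∈ W, (fun i => (q i : ℝ)) ⬝ᵥ v = 0 := by
  obtain ⟨f, hf0, hfp, hind⟩ := F.exists_annihilator_linearIndependent_krylov p
  have hfC : f.map (algebraMap ℤ ℝ) ∣
      ((F.map (Int.cast : ℤ → ℝ)).mulVecLin.restrict hC).charpoly :=
    map_dvd_of_aeval_mulVec_eq_zero hf0 hfp hind (by
      rw [← aeval_mulVecLin_apply]
      exact LinearMap.aeval_charpoly_restrict_apply _ hC hpC)
  obtain ⟨a, b, hab⟩ := hcop.of_isCoprime_of_dvd_left hfC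
  obtain ⟨q, hq0, hqf⟩ := exists_vecMul_eq_zero_iff.mpr
    (exists_mulVec_eq_zero_iff.mp ⟨p, hp, hfp⟩)
  refine ⟨q, hq0, fun v hv => ?_⟩
  have hrange : aeval (F.map (Int.cast : ℤ → ℝ)) f *ᵥ (aeval (F.map (Int.cast : ℤ → ℝ)) a *ᵥ v) =
      v := by
    have := congrArg (fun h => aeval (F.map (Int.cast : ℤ → ℝ)).mulVecLin h v) hab
    simp only [mul_comm a, map_add, map_mul, map_one, LinearMap.add_apply, Module.End.mul_apply,
      LinearMap.aeval_charpoly_restrict_apply _ hW hv, map_zero, add_zero, Module.End.one_apply,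
      aeval_mulVecLin_apply] at this
    rwa [aeval_map_algebraMap] at this
  have hqf' : (fun i => (q i : ℝ)) ᵥ* aeval (F.map (Int.cast : ℤ → ℝ)) f = 0 := by
    rw [show F.map (Int.cast : ℤ → ℝ) = F.map (algebraMap ℤ ℝ) from rfl, aeval_map_algebraMap_eq]
    funext i
    simpa [hqf, Function.comp_def] using (RingHom.map_vecMul (algebraMap ℤ ℝ) (aeval F f) q i).symm
  rw [← hrange, dotProduct_mulVec, hqf', zero_dotProduct]

section IntAction

variable {n G G' : Type*} [Fintype n] [AddCommGroup G] [AddCommGroup G']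

def intDot (q : n → ℤ) : (n → G) →+ G :=
  ∑ i, q i • Pi.evalAddMonoidHom (fun _ : n => G) i

@[simp]
theorem intDot_apply (q : n → ℤ) (x : n → G) : intDot q x = ∑ i, q i • x i := by
  simp [intDot]

theorem intDot_comp (q : n → ℤ) (ψ : G →+ G') (x : n → G) :
    intDot q (ψ ∘ x) = ψ (intDot q x) := by
  simp [map_sum, map_zsmul]

theorem intDot_real (q : n → ℤ) (v : n → ℝ) : intDot q v = (fun i => (q i : ℝ)) ⬝ᵥ v := by
  simp [dotProduct, zsmul_eq_mul]

theorem continuous_intDot [TopologicalSpace G] [IsTopologicalAddGroup G] (q : n → ℤ) :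
    Continuous (intDot q : (n → G) → G) := by
  rw [show (intDot q : (n → G) → G) = fun x => ∑ i, q i • x i from funext (intDot_apply q)]
  fun_prop

def Matrix.intMulVec (M : Matrix n n ℤ) : (n → G) →+ (n → G) :=
  AddMonoidHom.pi fun i => intDot (M i)

@[simp]
theorem Matrix.intMulVec_apply (M : Matrix n n ℤ) (x : n → G) (i : n) :
    M.intMulVec x i = ∑ j, M i j • x j := by
  simp [intMulVec]

theorem Matrix.intMulVec_comp (M : Matrix n n ℤ) (ψ : G →+ G') (x : n → G) :
    M.intMulVec (ψ ∘ x) = ψ ∘ M.intMulVec x := by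
  funext i
  simp [map_sum, map_zsmul]

theorem Matrix.intMulVec_real (M : Matrix n n ℤ) (v : n → ℝ) :
    M.intMulVec v = M.map (Int.cast : ℤ → ℝ) *ᵥ v := by
  funext i
  simp [mulVec, dotProduct, zsmul_eq_mul]

theorem Matrix.intMulVec_mul [DecidableEq n] (M N : Matrix n n ℤ) (x : n → G) :
    (M * N).intMulVec x = M.intMulVec (N.intMulVec x) := by
  funext i
  simp only [intMulVec_apply, mul_apply, Finset.sum_smul, Finset.smul_sum, mul_smul]
  exact Finset.sum_comm

theorem Matrix.intMulVec_one [DecidableEq n] (x : n → G) :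
    (1 : Matrix n n ℤ).intMulVec x = x := by
  funext i
  simp [one_apply, ite_smul]

end IntAction

section Holonomy

variable {X : Type*} {T Tinv : X → X} {φ : X → ℝ} {E : X → X → Prop}

theorem rel_iterate (hT : ∀ x y, E x y → E (T x) (T y)) (k : ℕ) {x y : X} (hxy : E x y) :
    E (T^[k] x) (T^[k] y) := by
  induction k generalizing x y with
  | zero => exact hxy
  | succ k ih => exact ih (hT x y hxy)

theorem holS_eq_zero (hφ : ∀ x y, E x y → φ x = φ y) (hT : ∀ x y, E x y → E (T x) (T y))
    {x y : X} (hxy : E x y) : holS T φ x y = 0 := by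
  simp only [holS, hφ _ _ (rel_iterate hT _ hxy), sub_self, tsum_zero]

theorem holU_eq_zero (hφ : ∀ x y, E x y → φ x = φ y)
    (hTinv : ∀ x y, E x y → E (Tinv x) (Tinv y)) {x y : X} (hxy : E x y) :
    holU Tinv φ x y = 0 := by
  simp only [holU, hφ _ _ (rel_iterate hTinv _ hxy), sub_self, tsum_zero, neg_zero]

theorem trivialPCF_of_invariant {sRel uRel : X → X → Prop} (hφ : ∀ x y, E x y → φ x = φ y)
    (hT : ∀ x y, E x y → E (T x) (T y)) (hTinv : ∀ x y, E x y → E (Tinv x) (Tinv y))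
    (hs : ∀ x y, sRel x y → E x y) (hu : ∀ x y, uRel x y → E x y) :
    TrivialPCF T Tinv sRel uRel φ := by
  intro k γ s _ hγ
  refine Finset.sum_eq_zero fun j _ => ?_
  have hj := hγ j
  split_ifs at hj ⊢
  · exact holS_eq_zero hφ hT (hs _ _ hj)
  · exact holU_eq_zero hφ hTinv (hu _ _ hj)

end Holonomy

theorem birkhoffSum_eq_nsmul_of_isPeriodicPt {α M : Type*} [AddCommGroup M] {f : α → α}
    {φ u : α → M} {K : M} (h : ∀ x, φ x = u (f x) - u x + K) {m : ℕ} {x : α}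
    (hx : IsPeriodicPt f m x) : birkhoffSum f φ m x = m • K := by
  simp only [birkhoffSum, h, ← iterate_succ_apply' f, Finset.sum_add_distrib,
    Finset.sum_range_sub (fun k => u (f^[k] x)), hx.eq, iterate_zero_apply, sub_self, zero_add,
    Finset.sum_const, Finset.card_range]

theorem Function.Injective.mem_periodicPts_of_mapsTo {α : Type*} {f : α → α}
    (hf : Injective f) {s : Set α} (hs : s.Finite) (hfs : MapsTo f s s) {x : α} (hx : x ∈ s) :
    x ∈ periodicPts f := by
  obtain ⟨m, -, n, -, hne, heq⟩ := Set.infinite_univ.exists_ne_map_eq_of_mapsTo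
    (f := fun k => f^[k] x) (fun k _ => hfs.iterate k hx) hs
  rcases lt_or_gt_of_ne hne with hlt | hlt
  · exact mk_mem_periodicPts (by lia) (iterate_cancel hf heq.symm)
  · exact mk_mem_periodicPts (by lia) (iterate_cancel hf heq)

section Torus

variable {n : Type*} [Fintype n]

theorem Matrix.intMulVec_add_coe (M : Matrix n n ℤ) (x : n → AddCircle (1 : ℝ)) (v : n → ℝ) :
    M.intMulVec (x + fun i => (v i : AddCircle (1 : ℝ))) =
      M.intMulVec x + fun i => ((M.map (Int.cast : ℤ → ℝ) *ᵥ v) i : AddCircle (1 : ℝ)) := by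
  rw [map_add, ← intMulVec_real]
  exact congrArg _ (M.intMulVec_comp (QuotientAddGroup.mk' _) v)

theorem intDot_add_coe (q : n → ℤ) (x : n → AddCircle (1 : ℝ)) (v : n → ℝ) :
    intDot q (x + fun i => (v i : AddCircle (1 : ℝ))) =
      intDot q x + (((fun i => (q i : ℝ)) ⬝ᵥ v : ℝ) : AddCircle (1 : ℝ)) := by
  rw [map_add, ← intDot_real]
  exact congrArg _ (intDot_comp q (QuotientAddGroup.mk' _) v)

variable [DecidableEq n]

theorem trivialPCF_norm_intDot {F G : Matrix n n ℤ} (hGF : G * F = 1) {W : Submodule ℝ (n → ℝ)}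
    (hW : ∀ v ∈ W, F.map (Int.cast : ℤ → ℝ) *ᵥ v ∈ W) {q : n → ℤ}
    (hq : ∀ v ∈ W, (fun i => (q i : ℝ)) ⬝ᵥ v = 0)
    {sRel uRel : (n → AddCircle (1 : ℝ)) → (n → AddCircle (1 : ℝ)) → Prop}
    (hs : ∀ x y, sRel x y → ∃ v ∈ W, y = x + fun i => (v i : AddCircle (1 : ℝ)))
    (hu : ∀ x y, uRel x y → ∃ v ∈ W, y = x + fun i => (v i : AddCircle (1 : ℝ))) :
    TrivialPCF F.intMulVec G.intMulVec sRel uRel fun x => ‖intDot q x‖ := by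
  have hBA : (G.map (Int.cast : ℤ → ℝ)).mulVecLin ∘ₗ (F.map (Int.cast : ℤ → ℝ)).mulVecLin =
      LinearMap.id := by
    have hGFℝ : G.map (Int.cast : ℤ → ℝ) * F.map Int.cast = 1 := by
      simpa [hGF] using (Matrix.map_mul (f := Int.castRingHom ℝ) (L := G) (M := F)).symm
    rw [← mulVecLin_mul, hGFℝ, mulVecLin_one]
  refine trivialPCF_of_invariant
    (E := fun x y => ∃ v ∈ W, y = x + fun i => (v i : AddCircle (1 : ℝ))) ?_ ?_ ?_ hs hu
  · rintro x _ ⟨v, hv, rfl⟩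
    rw [intDot_add_coe, hq v hv, QuotientAddGroup.mk_zero, add_zero]
  · rintro x _ ⟨v, hv, rfl⟩
    exact ⟨_, hW v hv, F.intMulVec_add_coe x v⟩
  · rintro x _ ⟨v, hv, rfl⟩
    exact ⟨_, LinearMap.apply_mem_of_comp_eq_id hBA hW hv, G.intMulVec_add_coe x v⟩

theorem mem_periodicPts_intMulVec_of_nsmul_eq_zero {F G : Matrix n n ℤ} (hGF : G * F = 1)
    {k : ℕ} (hk : 0 < k) {x : n → AddCircle (1 : ℝ)} (hx : k • x = 0) :
    x ∈ periodicPts F.intMulVec := by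
  have hinj : Injective (F.intMulVec : (n → AddCircle (1 : ℝ)) → _) :=
    LeftInverse.injective (g := G.intMulVec) fun y => by rw [← intMulVec_mul, hGF, intMulVec_one]
  have hpi : {y : n → AddCircle (1 : ℝ) | k • y = 0} =
      univ.pi fun _ => {u : AddCircle (1 : ℝ) | k • u = 0} := by
    ext y
    simp [funext_iff]
  have hfin : {y : n → AddCircle (1 : ℝ) | k • y = 0}.Finite :=
    hpi ▸ Set.Finite.pi fun _ => AddCircle.finite_torsion 1 hk
  refine hinj.mem_periodicPts_of_mapsTo hfin (fun y (hy : k • y = 0) => ?_) hx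
  simp only [mem_ofPred_eq, ← map_nsmul, hy, map_zero]

theorem exists_torsion_intDot_eq_half {q : n → ℤ} (hq : q ≠ 0) :
    ∃ (x : n → AddCircle (1 : ℝ)) (k : ℕ), 0 < k ∧ k • x = 0 ∧
      intDot q x = ((1 / 2 : ℝ) : AddCircle (1 : ℝ)) := by
  obtain ⟨i, hi⟩ := Function.ne_iff.mp hq
  have hqi : (q i : ℝ) ≠ 0 := by exact_mod_cast hi
  have h2qi : ((2 * q i : ℤ) : ℝ) ≠ 0 := by push_cast; positivity
  refine ⟨Pi.single i (((2 * q i : ℤ) : ℝ)⁻¹ : ℝ), (2 * q i).natAbs,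
    Int.natAbs_pos.mpr (mul_ne_zero two_ne_zero hi), ?_, ?_⟩
  · rw [natAbs_nsmul_eq_zero, ← Pi.single_smul, ← AddCircle.coe_zsmul, zsmul_eq_mul,
      mul_inv_cancel₀ h2qi, AddCircle.coe_period, Pi.single_zero]
  · simp only [intDot_apply, Pi.single_apply, smul_ite, smul_zero, Finset.sum_ite_eq',
      Finset.mem_univ, if_true]
    rw [← AddCircle.coe_zsmul, zsmul_eq_mul]
    congr 1
    push_cast
    field_simp

theorem not_exists_coboundary_norm_intDot {F G : Matrix n n ℤ} (hGF : G * F = 1) {q : n → ℤ}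
    (hq : q ≠ 0) : ¬ ∃ (u : (n → AddCircle (1 : ℝ)) → ℝ) (K : ℝ),
      ∀ x, ‖intDot q x‖ = u (F.intMulVec x) - u x + K := by
  rintro ⟨u, K, hu⟩
  have hK : K = 0 := by simpa [eq_comm] using hu 0
  obtain ⟨x₀, k, hk, htors, hx₀⟩ := exists_torsion_intDot_eq_half hq
  obtain ⟨m, hm, hper⟩ := mem_periodicPts_intMulVec_of_nsmul_eq_zero hGF hk htors
  have hsum := birkhoffSum_eq_nsmul_of_isPeriodicPt hu hper
  rw [hK, smul_zero] at hsum
  refine hsum.not_gt (Finset.sum_pos' (fun _ _ => norm_nonneg _) ⟨0, Finset.mem_range.mpr hm, ?_⟩)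
  simp only [iterate_zero_apply, hx₀, AddCircle.norm_half_period_eq]
  norm_num

end Torus

theorem stmt_17_general (d : ℕ) (F G : Matrix (Fin d) (Fin d) ℤ)
    (hFG : F * G = 1)
    (A : (Fin d → ℝ) →ₗ[ℝ] (Fin d → ℝ))
    (hA : A = ((F.map (Int.cast : ℤ → ℝ)).mulVecLin))
    (S C U : Submodule ℝ (Fin d → ℝ))
    (hCinv : ∀ x ∈ C, A x ∈ C)
    (hSUinv : ∀ x ∈ S ⊔ U, A x ∈ S ⊔ U)
    -- disjoint spectra of `F|_C` and `F|_{S⊕U}` (partial hyperbolicity)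
    (hspec : ∀ z : ℂ, ¬ (((LinearMap.charpoly (A.restrict hCinv)).map
        (algebraMap ℝ ℂ)).IsRoot z ∧
      ((LinearMap.charpoly (A.restrict hSUinv)).map (algebraMap ℝ ℂ)).IsRoot z))
    -- `F` is NOT Katznelson irreducible
    (hnotKatz : ∃ p : Fin d → ℤ, p ≠ 0 ∧ (fun i => (p i : ℝ)) ∈ C)
    -- the induced toral automorphism and its inverse
    (T Tinv : (Fin d → AddCircle (1 : ℝ)) → (Fin d → AddCircle (1 : ℝ)))
    (hT : ∀ x i, T x i = ∑ j, F i j • x j)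
    (hTinv : ∀ x i, Tinv x i = ∑ j, G i j • x j)
    -- stable / unstable relations: translation by (the projection of) a vector
    -- of `S` resp. `U`
    (sRel uRel : (Fin d → AddCircle (1 : ℝ)) → (Fin d → AddCircle (1 : ℝ)) → Prop)
    (hsRel : ∀ x y, sRel x y ↔ ∃ v ∈ S, y = x + fun i => ((v i : ℝ) : AddCircle (1 : ℝ)))
    (huRel : ∀ x y, uRel x y ↔ ∃ v ∈ U, y = x + fun i => ((v i : ℝ) : AddCircle (1 : ℝ))) :
    ∃ φ : (Fin d → AddCircle (1 : ℝ)) → ℝ, Continuous φ ∧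
      TrivialPCF T Tinv sRel uRel φ ∧
      ¬ ∃ (u : (Fin d → AddCircle (1 : ℝ)) → ℝ) (K : ℝ),
        Continuous u ∧ ∀ x, φ x = u (T x) - u x + K := by
  subst hA
  obtain ⟨p, hp, hpC⟩ := hnotKatz
  obtain ⟨q, hq, hqW⟩ := exists_int_orthogonal_of_int_mem F hCinv hSUinv
    (isCoprime_of_forall_not_isRoot_map hspec) hp hpC
  have hGF : G * F = 1 := mul_eq_one_comm.mp hFG
  obtain rfl : T = F.intMulVec := funext fun x => funext fun i => by simp [hT]
  obtain rfl : Tinv = G.intMulVec := funext fun x => funext fun i => by simp [hTinv]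
  refine ⟨fun x => ‖intDot q x‖, (continuous_intDot q).norm,
    trivialPCF_norm_intDot hGF hSUinv hqW ?_ ?_,
    fun ⟨u, K, _, hu⟩ => not_exists_coboundary_norm_intDot hGF hq ⟨u, K, hu⟩⟩
  · intro x y h
    obtain ⟨v, hv, rfl⟩ := (hsRel x y).mp h
    exact ⟨v, Submodule.mem_sup_left hv, rfl⟩
  · intro x y h
    obtain ⟨v, hv, rfl⟩ := (huRel x y).mp h
    exact ⟨v, Submodule.mem_sup_right hv, rfl⟩

/-- if `F ∈ SL(d,ℤ)` is not Katznelson irreducible, then there is a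
continuous function on `𝕋^d` with trivial periodic cycle functionals which is not
cohomologous to a constant. -/
theorem stmt_17 (d : ℕ) (F G : Matrix (Fin d) (Fin d) ℤ)
    (hdet : F.det = 1) (hFG : F * G = 1)
    (A : (Fin d → ℝ) →ₗ[ℝ] (Fin d → ℝ))
    (hA : A = ((F.map (Int.cast : ℤ → ℝ)).mulVecLin))
    (S C U : Submodule ℝ (Fin d → ℝ))
    (hcompl : IsCompl C (S ⊔ U)) (hSU : Disjoint S U)
    (hCinv : ∀ x ∈ C, A x ∈ C) (hSinv : ∀ x ∈ S, A x ∈ S) (hUinv : ∀ x ∈ U, A x ∈ U)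
    (hSUinv : ∀ x ∈ S ⊔ U, A x ∈ S ⊔ U)
    -- disjoint spectra of `F|_C` and `F|_{S⊕U}` (partial hyperbolicity)
    (hspec : ∀ z : ℂ, ¬ (((LinearMap.charpoly (A.restrict hCinv)).map
        (algebraMap ℝ ℂ)).IsRoot z ∧
      ((LinearMap.charpoly (A.restrict hSUinv)).map (algebraMap ℝ ℂ)).IsRoot z))
    -- `F` is NOT Katznelson irreducible
    (hnotKatz : ∃ p : Fin d → ℤ, p ≠ 0 ∧ (fun i => (p i : ℝ)) ∈ C)
    -- the induced toral automorphism and its inverse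
    (T Tinv : (Fin d → AddCircle (1 : ℝ)) → (Fin d → AddCircle (1 : ℝ)))
    (hT : ∀ x i, T x i = ∑ j, F i j • x j)
    (hTinv : ∀ x i, Tinv x i = ∑ j, G i j • x j)
    -- stable / unstable relations: translation by (the projection of) a vector
    -- of `S` resp. `U`
    (sRel uRel : (Fin d → AddCircle (1 : ℝ)) → (Fin d → AddCircle (1 : ℝ)) → Prop)
    (hsRel : ∀ x y, sRel x y ↔ ∃ v ∈ S, y = x + fun i => ((v i : ℝ) : AddCircle (1 : ℝ)))
    (huRel : ∀ x y, uRel x y ↔ ∃ v ∈ U, y = x + fun i => ((v i : ℝ) : AddCircle (1 : ℝ))) :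
    ∃ φ : (Fin d → AddCircle (1 : ℝ)) → ℝ, Continuous φ ∧
      TrivialPCF T Tinv sRel uRel φ ∧
      ¬ ∃ (u : (Fin d → AddCircle (1 : ℝ)) → ℝ) (K : ℝ),
        Continuous u ∧ ∀ x, φ x = u (T x) - u x + K :=
  stmt_17_general d F G hFG A hA S C U hCinv hSUinv hspec hnotKatz T Tinv hT hTinv sRel uRel hsRel
    huRel
end
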